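/- arXiv:math/0206016 — 4 statements merged into one kernel-verified Lean document; each statement's English description precedes it below -/
import Mathlib

section
/- Define u(x,y) = y·tanh(x) and v(x,y) = (1/2)y²·sech²(x) − (1/2)cosh²(x). Then u and v are smooth on ℝ² and satisfy ∂u/∂x = ∂v/∂y and ∂v/∂x = −2(v² + y²)^{1/2} ∂u/∂y at every point of ℝ². -/
lemma myTanh (x : ℝ) : HasDerivAt Real.tanh (1 / Real.cosh x ^ 2) x := by
  have h := (Real.hasDerivAt_sinh x).div (Real.hasDerivAt_cosh x) (Real.cosh_pos x).ne'
  have e : (Real.sinh / Real.cosh) = Real.tanh := by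
    funext y; rw [Real.tanh_eq_sinh_div_cosh]; rfl
  have e2 : (Real.cosh x * Real.cosh x - Real.sinh x * Real.sinh x) / Real.cosh x ^ 2
      = 1 / Real.cosh x ^ 2 := by
    have := Real.cosh_sq_sub_sinh_sq x; congr 1; nlinarith [Real.cosh_pos x]
  rw [e, e2] at h; exact h

lemma myContDiffTanh : ContDiff ℝ (⊤ : ℕ∞) Real.tanh := by
  have e : Real.tanh = fun y => Real.sinh y / Real.cosh y := by
    funext y; rw [Real.tanh_eq_sinh_div_cosh]
  rw [e]
  exact Real.contDiff_sinh.div Real.contDiff_cosh (fun x => (Real.cosh_pos x).ne')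

theorem stmt1 (u v : ℝ × ℝ → ℝ)
    (hu : u = fun p => p.2 * Real.tanh p.1)
    (hv : v = fun p => (1/2) * p.2 ^ 2 * (1 / Real.cosh p.1) ^ 2
                        - (1/2) * (Real.cosh p.1) ^ 2) :
    ContDiff ℝ (⊤ : ℕ∞) u ∧ ContDiff ℝ (⊤ : ℕ∞) v ∧
    ∀ p : ℝ × ℝ,
      fderiv ℝ u p (1, 0) = fderiv ℝ v p (0, 1) ∧
      fderiv ℝ v p (1, 0)
        = -2 * Real.sqrt ((v p) ^ 2 + p.2 ^ 2) * fderiv ℝ u p (0, 1) := by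
  subst hu hv
  have hcne : ∀ x : ℝ, Real.cosh x ≠ 0 := fun x => (Real.cosh_pos x).ne'
  refine ⟨?_, ?_, ?_⟩
  · exact contDiff_snd.mul (myContDiffTanh.comp contDiff_fst)
  · exact ((contDiff_const.mul (contDiff_snd.pow 2)).mul
      ((contDiff_const.div (Real.contDiff_cosh.comp contDiff_fst)
        (fun p => hcne p.1)).pow 2)).sub
      (contDiff_const.mul ((Real.contDiff_cosh.comp contDiff_fst).pow 2))
  intro p
  set x := p.1 with hx
  set y := p.2 with hy
  -- partial derivative building blocks
  have hcosh : HasFDerivAt (fun q : ℝ × ℝ => Real.cosh q.1)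
      (Real.sinh x • ContinuousLinearMap.fst ℝ ℝ ℝ) p :=
    by have := (Real.hasDerivAt_cosh x).comp_hasFDerivAt p (hasFDerivAt_fst (𝕜 := ℝ) (E := ℝ) (F := ℝ) (p := p)); exact this
  have htanh : HasFDerivAt (fun q : ℝ × ℝ => Real.tanh q.1)
      ((1 / Real.cosh x ^ 2) • ContinuousLinearMap.fst ℝ ℝ ℝ) p :=
    by have := (myTanh x).comp_hasFDerivAt p (hasFDerivAt_fst (𝕜 := ℝ) (E := ℝ) (F := ℝ) (p := p)); exact this
  have hu' := (hasFDerivAt_snd (𝕜 := ℝ) (E := ℝ) (F := ℝ) (p := p)).mul htanh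
  have hsech1 : HasDerivAt (fun t : ℝ => 1 / Real.cosh t)
      ((0 * Real.cosh x - 1 * Real.sinh x) / Real.cosh x ^ 2) x :=
    (hasDerivAt_const x (1:ℝ)).div (Real.hasDerivAt_cosh x) (hcne x)
  have hsech : HasFDerivAt (fun q : ℝ × ℝ => 1 / Real.cosh q.1)
      (((0 * Real.cosh x - 1 * Real.sinh x) / Real.cosh x ^ 2) •
        ContinuousLinearMap.fst ℝ ℝ ℝ) p :=
    by have := hsech1.comp_hasFDerivAt p (hasFDerivAt_fst (𝕜 := ℝ) (E := ℝ) (F := ℝ) (p := p)); exact this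
  have hy2 : HasFDerivAt (fun q : ℝ × ℝ => q.2 ^ 2) _ p :=
    ((hasDerivAt_pow 2 y).comp_hasFDerivAt p (hasFDerivAt_snd (𝕜 := ℝ) (E := ℝ) (F := ℝ) (p := p)) :)
  have hsech2 : HasFDerivAt (fun q : ℝ × ℝ => (1 / Real.cosh q.1) ^ 2) _ p :=
    ((hsech1.pow 2).comp_hasFDerivAt p (hasFDerivAt_fst (𝕜 := ℝ) (E := ℝ) (F := ℝ) (p := p)) :)
  have hcosh2 : HasFDerivAt (fun q : ℝ × ℝ => Real.cosh q.1 ^ 2) _ p :=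
    (((Real.hasDerivAt_cosh x).pow 2).comp_hasFDerivAt p (hasFDerivAt_fst (𝕜 := ℝ) (E := ℝ) (F := ℝ) (p := p)) :)
  have hv₀ := ((hy2.const_mul ((1:ℝ)/2)).mul hsech2).sub (hcosh2.const_mul ((1:ℝ)/2))
  have hu'' : HasFDerivAt (fun q : ℝ × ℝ => q.2 * Real.tanh q.1) _ p := hu'
  have hv'' : HasFDerivAt (fun q : ℝ × ℝ => (1/2) * q.2 ^ 2 * (1 / Real.cosh q.1) ^ 2
      - (1/2) * (Real.cosh q.1) ^ 2) _ p := hv₀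
  rw [hu''.fderiv, hv''.fderiv]
  have hA : Real.sqrt (((1/2) * y ^ 2 * (1 / Real.cosh x) ^ 2
      - (1/2) * (Real.cosh x) ^ 2) ^ 2 + y ^ 2)
      = (1/2) * y ^ 2 * (1 / Real.cosh x) ^ 2 + (1/2) * (Real.cosh x) ^ 2 := by
    have key : ((1/2) * y ^ 2 * (1 / Real.cosh x) ^ 2 - (1/2) * (Real.cosh x) ^ 2) ^ 2 + y ^ 2
        = ((1/2) * y ^ 2 * (1 / Real.cosh x) ^ 2 + (1/2) * (Real.cosh x) ^ 2) ^ 2 := by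
      field_simp
      ring
    rw [key, Real.sqrt_sq (by positivity)]
  constructor
  · simp only [ContinuousLinearMap.sub_apply, ContinuousLinearMap.add_apply, ContinuousLinearMap.smul_apply,
      ContinuousLinearMap.coe_fst', ContinuousLinearMap.coe_snd', smul_eq_mul]
    rw [← hx, ← hy]
    norm_num
    field_simp
  · simp only [ContinuousLinearMap.sub_apply, ContinuousLinearMap.add_apply,
      ContinuousLinearMap.smul_apply, ContinuousLinearMap.coe_fst',
      ContinuousLinearMap.coe_snd', ContinuousLinearMap.zero_apply,
      smul_eq_mul, hA]
    rw [← hx, ← hy, hA]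
    simp only [Real.tanh_eq_sinh_div_cosh]
    have h1 := Real.cosh_sq_sub_sinh_sq x
    norm_num
    field_simp
    ring
end

section
/- Define u(x,y) = |y| − (1/2)cosh(2x) and v(x,y) = −y·sinh(2x). Then at every point (x,y) with y ≠ 0, u and v are differentiable and satisfy ∂u/∂x = ∂v/∂y and ∂v/∂x = −2(v² + y²)^{1/2} ∂u/∂y. -/
/-! Away from `y = 0`, `|y|` is smooth with derivative `sign y`, so both partial derivatives are
explicit. The second equation then rests on `v² + y² = y² cosh² 2x`, which makes the square root
equal to `|y| cosh 2x`, together with `|y| · sign y = y`. -/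

open Real ContinuousLinearMap

theorem sqrt_mul_sinh_sq_add_sq (y t : ℝ) : √((y * sinh t) ^ 2 + y ^ 2) = |y| * cosh t := by
  rw [← sqrt_sq (by positivity : 0 ≤ |y| * cosh t), mul_pow |y|, sq_abs, cosh_sq]
  ring_nf

theorem hasFDerivAt_abs_snd_sub_cosh {p : ℝ × ℝ} (hp : p.2 ≠ 0) :
    HasFDerivAt (fun q : ℝ × ℝ => |q.2| - (1/2) * cosh (2 * q.1))
      ((SignType.sign p.2 : ℝ) • snd ℝ ℝ ℝ - sinh (2 * p.1) • fst ℝ ℝ ℝ) p := by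
  refine ((hasFDerivAt_snd (𝕜 := ℝ)).abs hp).sub
    (((hasFDerivAt_fst (𝕜 := ℝ)).const_mul 2).cosh.const_mul (1/2)) |>.congr_fderiv ?_
  ext <;> simp
  ring

theorem hasFDerivAt_neg_snd_mul_sinh (p : ℝ × ℝ) :
    HasFDerivAt (fun q : ℝ × ℝ => -q.2 * sinh (2 * q.1))
      (-(2 * p.2 * cosh (2 * p.1)) • fst ℝ ℝ ℝ - sinh (2 * p.1) • snd ℝ ℝ ℝ) p := by
  refine (hasFDerivAt_snd (𝕜 := ℝ)).neg.mul
    ((hasFDerivAt_fst (𝕜 := ℝ)).const_mul 2).sinh |>.congr_fderiv ?_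
  ext <;> simp
  ring

theorem stmt2 (u v : ℝ × ℝ → ℝ)
    (hu : u = fun p => |p.2| - (1/2) * Real.cosh (2 * p.1))
    (hv : v = fun p => -p.2 * Real.sinh (2 * p.1)) :
    ∀ p : ℝ × ℝ, p.2 ≠ 0 →
      DifferentiableAt ℝ u p ∧ DifferentiableAt ℝ v p ∧
      fderiv ℝ u p (1, 0) = fderiv ℝ v p (0, 1) ∧
      fderiv ℝ v p (1, 0)
        = -2 * Real.sqrt ((v p) ^ 2 + p.2 ^ 2) * fderiv ℝ u p (0, 1) := by
  subst hu hv
  intro p hp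
  have hdu := hasFDerivAt_abs_snd_sub_cosh hp
  have hdv := hasFDerivAt_neg_snd_mul_sinh p
  refine ⟨hdu.differentiableAt, hdv.differentiableAt, ?_, ?_⟩ <;> rw [hdu.fderiv, hdv.fderiv]
  · simp
  · simp [sqrt_mul_sinh_sq_add_sq]
    linear_combination (2 * cosh (2 * p.1)) * (abs_mul_sign p.2).symm
end

section
/- Let a ≥ 0 and define N_a = {(z₁,z₂,z₃) ∈ ℂ³ : |z₁|² − 2a = |z₂|² = |z₃|², Im(z₁z₂z₃) = 0, Re(z₁z₂z₃) ≥ 0}. Then ω restricted to the tangent space of N_a vanishes at every smooth point of N_a, where ω = (i/2)(dz₁∧dz̄₁ + dz₂∧dz̄₂ + dz₃∧dz̄₃) is the standard Kähler form on ℂ³; i.e. N_a is Lagrangian at its smooth points. -/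
open Complex

/-- The standard Kähler form ω = (i/2)∑ dzⱼ∧dz̄ⱼ of ℂ³, evaluated on a pair of
tangent vectors: ω(w,z) = ∑ⱼ Im(w̄ⱼ zⱼ). -/
noncomputable def stdKahlerForm (w z : ℂ × ℂ × ℂ) : ℝ :=
  ((starRingEnd ℂ w.1) * z.1 + (starRingEnd ℂ w.2.1) * z.2.1
    + (starRingEnd ℂ w.2.2) * z.2.2).im

/-- The Harvey–Lawson U(1)²-invariant set N_a ⊂ ℂ³. -/
def HLset (a : ℝ) : Set (ℂ × ℂ × ℂ) :=
  {p | ‖p.1‖ ^ 2 - 2 * a = ‖p.2.1‖ ^ 2 ∧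
       ‖p.2.1‖ ^ 2 = ‖p.2.2‖ ^ 2 ∧
       (p.1 * p.2.1 * p.2.2).im = 0 ∧ 0 ≤ (p.1 * p.2.1 * p.2.2).re}

/-!
A tangent vector to `N_a` at `p` is killed by the differential at `p` of every function that is
constant on `N_a` and differentiable at `p`. Where `p₂ ≠ 0` (so that every `pⱼ ≠ 0`) the equations
`‖z₁‖² - ‖z₂‖² = 2a`, `‖z₂‖² = ‖z₃‖²` and `Im (z₁ z₂ z₃) = 0` suffice: writing `wⱼ = pⱼ αⱼ`, they
say that `|pⱼ|² Re αⱼ` does not depend on `j` and that `∑ Im αⱼ = 0`, which forces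
`ω(w, z) = ∑ |pⱼ|² Im (conj αⱼ βⱼ) = 0`. At the points `(p₁, 0, 0)` the cubic equation degenerates;
there the relation `‖z₁‖ z₃ = conj (z₁ z₂)`, valid on all of `N_a`, identifies `w₃` with
`conj (p₁ w₂) / |p₁|`, and the contributions of the last two coordinates cancel.
-/

open ComplexConjugate
open scoped ComplexOrder InnerProductSpace

theorem HasFDerivWithinAt.apply_eq_zero_of_mem_tangentConeAt {𝕜 E F : Type*}
    [NontriviallyNormedField 𝕜] [NormedAddCommGroup E] [NormedSpace 𝕜 E]
    [NormedAddCommGroup F] [NormedSpace 𝕜 F] {f : E → F} {f' : E →L[𝕜] F} {s : Set E}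
    {x y : E} (hf : HasFDerivWithinAt f f' s x) (hs : ∀ z ∈ s, f z = f x)
    (hy : y ∈ tangentConeAt 𝕜 s x) : f' y = 0 := by
  have himg : f '' s ⊆ {f x} := by
    rintro _ ⟨z, hz, rfl⟩
    exact hs z hz
  refine tangentConeAt_subset_zero ?_ (tangentConeAt_mono himg (hf.mapsTo_tangent_cone hy))
  rw [accPt_iff_frequently]
  simp

namespace Complex

theorem eq_conj_of_norm_eq_of_nonneg_mul {A B : ℂ} (hAB : ‖A‖ = ‖B‖) (hpos : 0 ≤ A * B) :
    B = conj A := by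
  rcases eq_or_ne A 0 with rfl | hA
  · rw [norm_zero, eq_comm, norm_eq_zero] at hAB
    simp [hAB]
  · refine mul_left_cancel₀ hA ?_
    rw [← norm_of_nonneg' hpos, mul_conj', norm_mul, ← hAB, sq]
    push_cast
    ring

theorem im_conj_mul_mul_mul (c u v : ℂ) :
    (conj (c * u) * (c * v)).im = normSq c * (conj u * v).im := by
  simp only [map_mul, mul_im, mul_re, conj_re, conj_im, normSq_apply]
  ring

theorem inner_mul_right_self (c u : ℂ) : ⟪c, c * u⟫_ℝ = normSq c * u.re := by
  rw [Complex.inner, mul_right_comm, mul_conj, re_ofReal_mul]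

end Complex

open Complex

/-- The linearisations at `p` of the equations `‖z₁‖² - ‖z₂‖² = 2a`, `‖z₂‖² = ‖z₃‖²` and
`Im (z₁ z₂ z₃) = 0` satisfied on `HLset a`. -/
def LinearizedHL (p w : ℂ × ℂ × ℂ) : Prop :=
  ⟪p.1, w.1⟫_ℝ = ⟪p.2.1, w.2.1⟫_ℝ ∧ ⟪p.2.1, w.2.1⟫_ℝ = ⟪p.2.2, w.2.2⟫_ℝ ∧
    (w.1 * p.2.1 * p.2.2 + p.1 * w.2.1 * p.2.2 + p.1 * p.2.1 * w.2.2).im = 0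

namespace HLset

variable {a : ℝ} {p w : ℂ × ℂ × ℂ}

theorem norm_snd_fst_eq_norm_snd_snd (hp : p ∈ HLset a) : ‖p.2.1‖ = ‖p.2.2‖ :=
  (sq_eq_sq₀ (norm_nonneg _) (norm_nonneg _)).1 hp.2.1

theorem snd_snd_eq_zero_iff (hp : p ∈ HLset a) : p.2.2 = 0 ↔ p.2.1 = 0 := by
  rw [← norm_eq_zero, ← norm_snd_fst_eq_norm_snd_snd hp, norm_eq_zero]

theorem fst_ne_zero (ha : 0 ≤ a) (hp : p ∈ HLset a) (hp0 : p ≠ 0) : p.1 ≠ 0 := by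
  intro h1
  have h2 : p.2.1 = 0 := by
    have := hp.1
    rw [h1, norm_zero] at this
    exact norm_eq_zero.1 (by nlinarith [norm_nonneg p.2.1])
  exact hp0 (Prod.ext h1 (Prod.ext h2 ((snd_snd_eq_zero_iff hp).2 h2)))

theorem norm_fst_mul_eq_conj (hp : p ∈ HLset a) :
    (‖p.1‖ : ℂ) * p.2.2 = conj (p.1 * p.2.1) := by
  refine eq_conj_of_norm_eq_of_nonneg_mul ?_ ?_
  · simp [norm_snd_fst_eq_norm_snd_snd hp]
  · have hP : 0 ≤ p.1 * p.2.1 * p.2.2 := nonneg_iff.2 ⟨hp.2.2.2, hp.2.2.1.symm⟩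
    calc (0 : ℂ) ≤ ‖p.1‖ * (p.1 * p.2.1 * p.2.2) := mul_nonneg (by simp) hP
      _ = _ := by ring

theorem linearizedHL_of_mem_tangentConeAt (hp : p ∈ HLset a)
    (hw : w ∈ tangentConeAt ℝ (HLset a) p) : LinearizedHL p w := by
  have h12 := (hasFDerivAt_fst.norm_sq.sub hasFDerivAt_snd.fst.norm_sq).hasFDerivWithinAt
    |>.apply_eq_zero_of_mem_tangentConeAt
      (fun z hz ↦ by simp only [Pi.sub_apply]; linarith [hz.1, hp.1]) hw
  have h23 := (hasFDerivAt_snd.fst.norm_sq.sub hasFDerivAt_snd.snd.norm_sq).hasFDerivWithinAt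
    |>.apply_eq_zero_of_mem_tangentConeAt
      (fun z hz ↦ by simp only [Pi.sub_apply]; linarith [hz.2.1, hp.2.1]) hw
  have h123 := (imCLM.hasFDerivAt.comp p
    ((hasFDerivAt_fst.mul hasFDerivAt_snd.fst).mul hasFDerivAt_snd.snd)).hasFDerivWithinAt
    |>.apply_eq_zero_of_mem_tangentConeAt (fun z hz ↦ by simp [hz.2.2.1, hp.2.2.1]) hw
  simp only [sub_apply, add_apply, smul_apply, ContinuousLinearMap.comp_apply,
    ContinuousLinearMap.coe_fst', ContinuousLinearMap.coe_snd', ContinuousLinearMap.comp_add,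
    coe_innerSL_apply, imCLM_apply, Pi.mul_apply, smul_eq_mul, nsmul_eq_mul, Nat.cast_ofNat,
    ← add_im] at h12 h23 h123
  refine ⟨by linarith, by linarith, ?_⟩
  convert h123 using 2
  ring

theorem norm_mul_eq_conj_of_mem_tangentConeAt (hp : p ∈ HLset a) (h1 : p.1 ≠ 0)
    (h2 : p.2.1 = 0) (h3 : p.2.2 = 0) (hw : w ∈ tangentConeAt ℝ (HLset a) p) :
    (‖p.1‖ : ℂ) * w.2.2 = conj (p.1 * w.2.1) := by
  have hnorm := ((hasFDerivAt_fst (𝕜 := ℝ) (p := p)).differentiableAt.norm ℝ h1).hasFDerivAt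
  have h := (((ofRealCLM.hasFDerivAt.comp p hnorm).mul hasFDerivAt_snd.snd).sub
    (conjCLE.hasFDerivAt.comp p (hasFDerivAt_fst.mul hasFDerivAt_snd.fst))).hasFDerivWithinAt
    |>.apply_eq_zero_of_mem_tangentConeAt
      (fun z hz ↦ by simp [norm_fst_mul_eq_conj hz, norm_fst_mul_eq_conj hp]) hw
  simpa [h2, h3, sub_eq_zero] using h

end HLset

theorem stdKahlerForm_eq_zero_of_linearizedHL {p w z : ℂ × ℂ × ℂ} (h1 : p.1 ≠ 0)
    (h2 : p.2.1 ≠ 0) (h3 : p.2.2 ≠ 0) (hP : (p.1 * p.2.1 * p.2.2).im = 0)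
    (hw : LinearizedHL p w) (hz : LinearizedHL p z) : stdKahlerForm w z = 0 := by
  obtain ⟨p₁, p₂, p₃⟩ := p
  obtain ⟨w₁, w₂, w₃⟩ := w
  obtain ⟨z₁, z₂, z₃⟩ := z
  obtain ⟨α₁, rfl⟩ : ∃ α, w₁ = p₁ * α := ⟨w₁ / p₁, (mul_div_cancel₀ _ h1).symm⟩
  obtain ⟨α₂, rfl⟩ : ∃ α, w₂ = p₂ * α := ⟨w₂ / p₂, (mul_div_cancel₀ _ h2).symm⟩
  obtain ⟨α₃, rfl⟩ : ∃ α, w₃ = p₃ * α := ⟨w₃ / p₃, (mul_div_cancel₀ _ h3).symm⟩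
  obtain ⟨β₁, rfl⟩ : ∃ β, z₁ = p₁ * β := ⟨z₁ / p₁, (mul_div_cancel₀ _ h1).symm⟩
  obtain ⟨β₂, rfl⟩ : ∃ β, z₂ = p₂ * β := ⟨z₂ / p₂, (mul_div_cancel₀ _ h2).symm⟩
  obtain ⟨β₃, rfl⟩ : ∃ β, z₃ = p₃ * β := ⟨z₃ / p₃, (mul_div_cancel₀ _ h3).symm⟩
  dsimp only at h1 h2 h3 hP
  have hPre : (p₁ * p₂ * p₃).re ≠ 0 := by
    intro h
    exact mul_ne_zero (mul_ne_zero h1 h2) h3 (Complex.ext h hP)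
  have him_sum (γ₁ γ₂ γ₃ : ℂ) : (p₁ * γ₁ * p₂ * p₃ + p₁ * (p₂ * γ₂) * p₃ + p₁ * p₂ * (p₃ * γ₃)).im
      = (p₁ * p₂ * p₃).re * (γ₁.im + γ₂.im + γ₃.im) := by
    rw [show p₁ * γ₁ * p₂ * p₃ + p₁ * (p₂ * γ₂) * p₃ + p₁ * p₂ * (p₃ * γ₃)
      = p₁ * p₂ * p₃ * (γ₁ + γ₂ + γ₃) by ring, mul_im, hP]
    simp
  obtain ⟨hw12, hw23, hw'⟩ := hw
  obtain ⟨hz12, hz23, hz'⟩ := hz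
  dsimp only at hw12 hw23 hw' hz12 hz23 hz'
  rw [him_sum, mul_eq_zero, or_iff_right hPre] at hw' hz'
  rw [inner_mul_right_self, inner_mul_right_self] at hw12 hw23 hz12 hz23
  simp only [stdKahlerForm, add_im, im_conj_mul_mul_mul]
  simp only [mul_im, conj_re, conj_im]
  linear_combination (normSq p₁ * α₁.re) * hz' - (normSq p₁ * β₁.re) * hw'
    - β₂.im * hw12 - β₃.im * hw12 - β₃.im * hw23
    + α₂.im * hz12 + α₃.im * hz12 + α₃.im * hz23

theorem stdKahlerForm_eq_zero_of_snd_eq_zero {p w z : ℂ × ℂ × ℂ} (h1 : p.1 ≠ 0)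
    (h2 : p.2.1 = 0) (hw : LinearizedHL p w) (hz : LinearizedHL p z)
    (hw' : (‖p.1‖ : ℂ) * w.2.2 = conj (p.1 * w.2.1))
    (hz' : (‖p.1‖ : ℂ) * z.2.2 = conj (p.1 * z.2.1)) : stdKahlerForm w z = 0 := by
  have hn : normSq p.1 ≠ 0 := normSq_eq_zero.not.2 h1
  have hw1 : (conj p.1 * w.1).re = 0 := by simpa [h2, Complex.inner, mul_comm] using hw.1
  have hz1 : (conj p.1 * z.1).re = 0 := by simpa [h2, Complex.inner, mul_comm] using hz.1
  have e1 : (conj w.1 * z.1).im = 0 := by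
    have h := im_conj_mul_mul_mul (conj p.1) w.1 z.1
    rw [mul_im, conj_re, conj_im, hw1, hz1, normSq_conj] at h
    simpa [hn] using h
  have e3 : (conj w.2.2 * z.2.2).im = -(conj w.2.1 * z.2.1).im := by
    refine mul_left_cancel₀ hn ?_
    calc normSq p.1 * (conj w.2.2 * z.2.2).im
        = (conj (‖p.1‖ * w.2.2) * (‖p.1‖ * z.2.2)).im := by
          rw [im_conj_mul_mul_mul, normSq_ofReal, normSq_eq_norm_sq, sq]
      _ = -(conj (p.1 * w.2.1) * (p.1 * z.2.1)).im := by
          rw [hw', hz', ← map_mul, conj_im, mul_comm]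
      _ = normSq p.1 * -(conj w.2.1 * z.2.1).im := by
          rw [im_conj_mul_mul_mul, mul_neg]
  simp only [stdKahlerForm, add_im, e1, e3]
  ring

theorem stmt8 (a : ℝ) (ha : 0 ≤ a) :
    ∀ p ∈ HLset a, p ≠ 0 →
      ∀ w ∈ tangentConeAt ℝ (HLset a) p, ∀ z ∈ tangentConeAt ℝ (HLset a) p,
        stdKahlerForm w z = 0 := by
  intro p hp hp0 w hw z hz
  have h1 := HLset.fst_ne_zero ha hp hp0
  have hwL := HLset.linearizedHL_of_mem_tangentConeAt hp hw
  have hzL := HLset.linearizedHL_of_mem_tangentConeAt hp hz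
  by_cases h2 : p.2.1 = 0
  · have h3 := (HLset.snd_snd_eq_zero_iff hp).2 h2
    exact stdKahlerForm_eq_zero_of_snd_eq_zero h1 h2 hwL hzL
      (HLset.norm_mul_eq_conj_of_mem_tangentConeAt hp h1 h2 h3 hw)
      (HLset.norm_mul_eq_conj_of_mem_tangentConeAt hp h1 h2 h3 hz)
  · have h3 := (HLset.snd_snd_eq_zero_iff hp).not.2 h2
    exact stdKahlerForm_eq_zero_of_linearizedHL h1 h2 h3 hp.2.2.1 hwL hzL
end

section
/- The m-form Re(dz₁∧⋯∧dzₘ) is a calibration on ℂᵐ with its standard Euclidean metric: it is closed, and for every oriented real m-dimensional subspace V of ℂᵐ, Re(dz₁∧⋯∧dzₘ)|_V ≤ vol_V. -/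
/-!
Re Ω has constant coefficients, so it is closed. For a real-orthonormal frame `e` each `eᵢ` is a
unit vector of ℂᵐ, so for `A = (eᵢⱼ)` the Gram matrix `A Aᴴ` is positive semidefinite with unit
diagonal, hence trace `m`; AM–GM on its eigenvalues gives `|det A|² = det (A Aᴴ) ≤ 1`, and
`Re Ω(e) ≤ |Ω(e)| = |det A| ≤ 1`.
-/

open Complex

/-- Ω = dz₁∧⋯∧dzₘ evaluated on an m-tuple of vectors of ℂᵐ. -/
noncomputable def holVol {m : ℕ} (e : Fin m → EuclideanSpace ℂ (Fin m)) : ℂ :=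
  Matrix.det (Matrix.of fun i j => e i j)

/-- Real-orthonormality: Re⟪eᵢ,eⱼ⟫ = δᵢⱼ (orthonormality for the real inner
product of ℂᵐ ≅ ℝ^{2m}); a real-orthonormal basis e of an oriented real m-plane
V has vol_V(e) = 1, so Re Ω|_V = α·vol_V with α = Re Ω(e). -/
def RealOrthonormal {m : ℕ} (e : Fin m → EuclideanSpace ℂ (Fin m)) : Prop :=
  ∀ i j, (@inner ℂ _ _ (e i) (e j)).re = if i = j then 1 else 0

/-- The m-form Re(dz₁∧⋯∧dzₘ) as a differential form on ℂᵐ: at each base point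
x it assigns to an m-tuple of tangent vectors the value Re Ω(e). -/
noncomputable def reOmegaForm (m : ℕ) (_x : EuclideanSpace ℂ (Fin m))
    (e : Fin m → EuclideanSpace ℂ (Fin m)) : ℝ :=
  (holVol e).re

open Matrix
open scoped ComplexOrder

theorem Real.prod_le_one_of_sum_eq_card {ι : Type*} [Fintype ι] {z : ι → ℝ}
    (hz : ∀ i, 0 ≤ z i) (hsum : ∑ i, z i = Fintype.card ι) : ∏ i, z i ≤ 1 := by
  rcases isEmpty_or_nonempty ι with _ | _
  · simp
  have hn : (0 : ℝ) < Fintype.card ι := by exact_mod_cast Fintype.card_pos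
  have amgm := Real.geom_mean_le_arith_mean_weighted Finset.univ
    (fun _ => (Fintype.card ι : ℝ)⁻¹) z (fun _ _ => by positivity)
    (by simp [hn.ne']) (fun i _ => hz i)
  rw [← Finset.mul_sum, hsum, inv_mul_cancel₀ hn.ne',
    Real.finsetProd_rpow _ _ (fun i _ => hz i)] at amgm
  have hprod : 0 ≤ ∏ i, z i := Finset.prod_nonneg fun i _ => hz i
  calc ∏ i, z i = ((∏ i, z i) ^ (Fintype.card ι : ℝ)⁻¹) ^ (Fintype.card ι : ℝ) :=
        (Real.rpow_inv_rpow hprod hn.ne').symm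
    _ ≤ 1 := Real.rpow_le_one (Real.rpow_nonneg hprod _) amgm hn.le

theorem Matrix.PosSemidef.norm_det_le_one_of_trace_eq_card {𝕜 n : Type*} [RCLike 𝕜]
    [Fintype n] [DecidableEq n] {H : Matrix n n 𝕜} (hH : H.PosSemidef)
    (htr : H.trace = Fintype.card n) : ‖H.det‖ ≤ 1 := by
  rw [hH.1.det_eq_prod_eigenvalues, ← RCLike.ofReal_prod, RCLike.norm_ofReal,
    abs_of_nonneg (Finset.prod_nonneg fun i _ => hH.eigenvalues_nonneg i)]
  refine Real.prod_le_one_of_sum_eq_card hH.eigenvalues_nonneg ?_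
  rw [hH.1.trace_eq_sum_eigenvalues] at htr
  exact_mod_cast htr

theorem Matrix.norm_det_le_one_of_norm_row_eq_one {𝕜 n : Type*} [RCLike 𝕜]
    [Fintype n] [DecidableEq n] {A : Matrix n n 𝕜}
    (hA : ∀ i, ‖WithLp.toLp 2 (A i)‖ = 1) : ‖A.det‖ ≤ 1 := by
  have hdiag : ∀ i, (A * Aᴴ) i i = 1 := by
    intro i
    have hinner : (A * Aᴴ) i i = inner 𝕜 (WithLp.toLp 2 (A i)) (WithLp.toLp 2 (A i)) := by
      simp [mul_apply, PiLp.inner_apply, -inner_self_eq_norm_sq_to_K]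
    rw [hinner, inner_self_eq_norm_sq_to_K, hA i, RCLike.ofReal_one, one_pow]
  have htr : (A * Aᴴ).trace = Fintype.card n := by
    simp [Matrix.trace, hdiag]
  have hdet := (posSemidef_self_mul_conjTranspose A).norm_det_le_one_of_trace_eq_card htr
  rw [det_mul, det_conjTranspose, norm_mul, norm_star, ← sq] at hdet
  exact (sq_le_one_iff₀ (norm_nonneg _)).mp hdet

theorem RealOrthonormal.norm_eq_one {m : ℕ} {e : Fin m → EuclideanSpace ℂ (Fin m)}
    (he : RealOrthonormal e) (i : Fin m) : ‖e i‖ = 1 := by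
  have := he i i
  rw [if_pos rfl, inner_self_eq_norm_sq_to_K] at this
  exact (pow_eq_one_iff_of_nonneg (norm_nonneg _) two_ne_zero).mp (by exact_mod_cast this)

theorem stmt12 (m : ℕ) :
    (∀ x y : EuclideanSpace ℂ (Fin m), reOmegaForm m x = reOmegaForm m y) ∧
    (∀ e : Fin m → EuclideanSpace ℂ (Fin m), RealOrthonormal e →
      reOmegaForm m 0 e ≤ 1) := by
  refine ⟨fun _ _ => rfl, fun e he => ?_⟩
  calc reOmegaForm m 0 e ≤ ‖holVol e‖ := re_le_norm _
    _ ≤ 1 := norm_det_le_one_of_norm_row_eq_one he.norm_eq_one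
end
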